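/- Let F be a finite field of characteristic 3 with q = 3^k elements and let n be a positive integer. Then there are group actions making the unit group U(F(C_n × D_12)) isomorphic to a semidirect product (C_3^{6nk} ⋊ C_3^{2nk}) ⋊ U(F(C_n × C_2 × C_2)). -/

import Mathlib

set_option linter.unusedSectionVars false
set_option maxHeartbeats 1000000

open Matrix

/-- The cyclic group `C_m` of order `m`. -/
abbrev Cyc (m : ℕ) : Type := Multiplicative (ZMod m)

/-- `dOrd q l` is the multiplicative order of `q` modulo `l`. -/
noncomputable def dOrd (q l : ℕ) : ℕ := orderOf ((q : ZMod l))

/-- `eMult q l = φ(l) / d_l` where `d_l` is the multiplicative order of `q` mod `l`. -/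
noncomputable def eMult (q l : ℕ) : ℕ := Nat.totient l / dOrd q l

/-- The index type of divisors `l > 1` of `n`. -/
abbrev Dvs (n : ℕ) : Type := {l : ℕ // l ∈ Nat.divisors n ∧ 1 < l}


/-- Any finite commutative group of exponent dividing 3 and order `3 ^ d` is
isomorphic to `Fin d → Cyc 3`. -/
lemma existsMulEquivPiCyc3 (Gp : Type*) [CommGroup Gp] [Finite Gp] (d : ℕ)
    (hcard : Nat.card Gp = 3 ^ d) (hexp : ∀ g : Gp, g ^ 3 = 1) :
    Nonempty (Gp ≃* (Fin d → Cyc 3)) := by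
  letI : Module (ZMod 3) (Additive Gp) :=
    AddCommGroup.zmodModule (by intro x; exact hexp x.toMul)
  haveI : Module.Finite (ZMod 3) (Additive Gp) := Module.Finite.of_finite
  let b := Module.finBasis (ZMod 3) (Additive Gp)
  have hd : Module.finrank (ZMod 3) (Additive Gp) = d := by
    have h1 : Nat.card (Additive Gp)
        = 3 ^ Module.finrank (ZMod 3) (Additive Gp) := by
      rw [Nat.card_congr b.equivFun.toEquiv]
      simp [Nat.card_fun, Nat.card_eq_fintype_card]
    have h2 : Nat.card (Additive Gp) = 3 ^ d := hcard
    exact (Nat.pow_right_injective (by norm_num) (h1.symm.trans h2))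
  let e1 : Additive Gp ≃+ (Fin d → ZMod 3) := by
    rw [← hd]; exact b.equivFun.toAddEquiv
  exact ⟨(MulEquiv.multiplicativeAdditive Gp).symm.trans
    ((AddEquiv.toMultiplicative e1).trans (MulEquiv.piMultiplicative (fun _ : Fin d => ZMod 3)))⟩


section Generic
variable {G H : Type*} [Group G] [Group H]

/-- The conjugation action of `H` on `ker φ` via a section `s`. -/
def splitAction (φ : G →* H) (s : H →* G) : H →* MulAut φ.ker :=
  MulAut.conjNormal.comp s

/-- A split surjection realizes `G` as a semidirect product of the kernel and `H`. -/
noncomputable def splitMulEquiv (φ : G →* H) (s : H →* G) (hs : ∀ h, φ (s h) = h) :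
    G ≃* φ.ker ⋊[splitAction φ s] H := by
  refine (MulEquiv.ofBijective
    (SemidirectProduct.lift φ.ker.subtype s ?_) ?_).symm
  · intro g
    ext n
    simp [splitAction, MulAut.conjNormal_apply]
  · constructor
    · intro x y hxy
      simp only [SemidirectProduct.lift] at hxy
      have h2 : φ (φ.ker.subtype x.1 * s x.2) = φ (φ.ker.subtype y.1 * s y.2) := by
        simp only [MonoidHom.coe_mk, OneHom.coe_mk] at hxy; rw [hxy]
      simp only [_root_.map_mul, hs] at h2
      have hx1 : φ (φ.ker.subtype x.1) = 1 := x.1.2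
      have hy1 : φ (φ.ker.subtype y.1) = 1 := y.1.2
      rw [hx1, hy1, one_mul, one_mul] at h2
      have hleft : (x.1 : G) = y.1 := by
        have := hxy
        simp only [MonoidHom.coe_mk, OneHom.coe_mk] at this
        have : (x.1 : G) * s x.2 = (y.1 : G) * s y.2 := this
        rw [h2] at this
        exact mul_right_cancel this
      ext
      · exact hleft
      · exact h2
    · intro g
      refine ⟨⟨⟨g * (s (φ g))⁻¹, ?_⟩, φ g⟩, ?_⟩
      · simp [MonoidHom.mem_ker, hs]
      · simp [SemidirectProduct.lift]

/-- Transport a semidirect product along isomorphisms of both factors. -/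
def sdpCongrAction {N N' H H' : Type*} [Group N] [Group N'] [Group H] [Group H']
    (eN : N ≃* N') (eH : H ≃* H') (φ : H →* MulAut N) : H' →* MulAut N' :=
  (MulAut.congr eN).toMonoidHom.comp (φ.comp eH.symm.toMonoidHom)

def sdpCongr {N N' H H' : Type*} [Group N] [Group N'] [Group H] [Group H']
    (eN : N ≃* N') (eH : H ≃* H') (φ : H →* MulAut N) :
    (N ⋊[φ] H) ≃* (N' ⋊[sdpCongrAction eN eH φ] H') where
  toFun x := ⟨eN x.1, eH x.2⟩
  invFun x := ⟨eN.symm x.1, eH.symm x.2⟩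
  left_inv x := by simp
  right_inv x := by simp
  map_mul' x y := by
    ext
    · rw [SemidirectProduct.mul_left, SemidirectProduct.mul_left]
      simp [sdpCongrAction, MulAut.congr]
    · simp

end Generic

open DihedralGroup in
def pDfun : DihedralGroup 6 → Cyc 2 × Cyc 2
  | .r i => (Multiplicative.ofAdd ((i.val : ZMod 2)), Multiplicative.ofAdd 0)
  | .sr i => (Multiplicative.ofAdd ((i.val : ZMod 2)), Multiplicative.ofAdd 1)

def iDfun : Cyc 2 × Cyc 2 → DihedralGroup 6 := fun p =>
  if p.2 = Multiplicative.ofAdd 0 then .r (3 * (p.1.toAdd.val : ZMod 6))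
  else .sr (3 * (p.1.toAdd.val : ZMod 6))

def pD : DihedralGroup 6 →* Cyc 2 × Cyc 2 := MonoidHom.mk' pDfun (by decide)

def iD : Cyc 2 × Cyc 2 →* DihedralGroup 6 := MonoidHom.mk' iDfun (by decide)

lemma natCard_mult (α : Type*) : Nat.card (Multiplicative α) = Nat.card α :=
  Nat.card_congr Multiplicative.toAdd

section AlgebraPart

variable (F : Type) [Field F] [CharP F 3] (n : ℕ) [NeZero n]

abbrev Gg : Type := Cyc n × DihedralGroup 6
abbrev Hh : Type := Cyc n × Cyc 2 × Cyc 2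
abbrev AA : Type := MonoidAlgebra F (Gg n)
abbrev BB : Type := MonoidAlgebra F (Hh n)

def pG : Gg n →* Hh n := (MonoidHom.id (Cyc n)).prodMap pD
def iG : Hh n →* Gg n := (MonoidHom.id (Cyc n)).prodMap iD

lemma pG_iG (x : Hh n) : pG n (iG n x) = x := by
  have : ∀ y, pD (iD y) = y := by decide
  cases x with
  | mk a b => simp [pG, iG, this]

noncomputable def piA : AA F n →ₐ[F] BB F n := MonoidAlgebra.mapDomainAlgHom F F (pG n)
noncomputable def sigA : BB F n →ₐ[F] AA F n := MonoidAlgebra.mapDomainAlgHom F F (iG n)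

/-- X g -/
noncomputable def XX (g : Gg n) : AA F n := MonoidAlgebra.single g 1

lemma XX_mul (g h : Gg n) : XX F n g * XX F n h = XX F n (g * h) := by
  simp [XX, MonoidAlgebra.single_mul_single]

lemma piA_XX (g : Gg n) : piA F n (XX F n g) = MonoidAlgebra.single (pG n g) (1:F) := by
  simp [piA, XX, MonoidAlgebra.mapDomainAlgHom, Finsupp.mapDomain_single]

lemma piA_sigA (x : BB F n) : piA F n (sigA F n x) = x := by
  have : (piA F n).comp (sigA F n) = AlgHom.id F (BB F n) := by
    unfold piA sigA
    rw [← MonoidAlgebra.mapDomainAlgHom_comp]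
    have h : (pG n).comp (iG n) = MonoidHom.id (Hh n) := by
      ext x : 1
      · exact pG_iG n _
    rw [h, MonoidAlgebra.mapDomainAlgHom_id]
  calc piA F n (sigA F n x) = ((piA F n).comp (sigA F n)) x := rfl
    _ = x := by rw [this]; rfl

/-- the central-ish order 3 element -/
def cc : Gg n := ((1 : Cyc n), DihedralGroup.r 2)

noncomputable def ωω : AA F n := XX F n (cc n) - 1

lemma charA : (3 : AA F n) = 0 := by
  have h : (3 : F) = 0 := by exact_mod_cast CharP.cast_eq_zero F 3
  rw [show (3 : AA F n) = algebraMap F (AA F n) 3 from (_root_.map_ofNat _ 3).symm, h, _root_.map_zero]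

lemma XX_cc_pow3 : XX F n (cc n) ^ 3 = 1 := by
  have h1 : (cc n) ^ 3 = 1 := by
    have : (cc n) ^ 3 = ((1:Cyc n)^3, (DihedralGroup.r 2 : DihedralGroup 6)^3) := rfl
    rw [this, one_pow, show (DihedralGroup.r 2 : DihedralGroup 6)^3 = 1 by decide]
    rfl
  have h2 : XX F n (cc n) ^ 3 = XX F n ((cc n)^3) := by
    show (MonoidAlgebra.of F (Gg n)) (cc n) ^ 3 = (MonoidAlgebra.of F (Gg n)) ((cc n)^3)
    rw [_root_.map_pow]
  rw [h2, h1]; rfl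

lemma omega_pow3 : ωω F n ^ 3 = 0 := by
  have h3 : (3 : AA F n) = 0 := charA F n
  have expand : ωω F n ^ 3 = XX F n (cc n) ^ 3 - 3 * XX F n (cc n)^2 + 3 * XX F n (cc n) - 1 := by
    unfold ωω; noncomm_ring
  rw [expand, h3, XX_cc_pow3]
  noncomm_ring


lemma conj_move {A : Type*} [Ring A] (x u v : A) (h : u * x = x * v) (y z : A) :
    (y * u) * (x * z) = (y * x) * (v * z) := by
  rw [mul_assoc y u (x*z), ← mul_assoc u x z, h, mul_assoc x v z, ← mul_assoc y x (v*z)]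

lemma omega_mul_X_r (t : Cyc n) (i : ZMod 6) :
    ωω F n * XX F n (t, .r i) = XX F n (t, .r i) * ωω F n := by
  have hc : (cc n) * (t, DihedralGroup.r i) = (t, DihedralGroup.r i) * cc n := by
    have h6 : ∀ j : ZMod 6, DihedralGroup.r 2 * DihedralGroup.r j
        = DihedralGroup.r j * DihedralGroup.r 2 := by decide
    show ((1:Cyc n) * t, DihedralGroup.r 2 * DihedralGroup.r i)
      = (t * 1, DihedralGroup.r i * DihedralGroup.r 2)
    rw [h6, one_mul, mul_one]
  unfold ωω
  rw [sub_mul, mul_sub, one_mul, mul_one, XX_mul, XX_mul, hc]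

lemma omega_mul_X_sr (t : Cyc n) (i : ZMod 6) :
    ωω F n * XX F n (t, .sr i) = XX F n (t, .sr i) * (ωω F n^2 + 2 * ωω F n) := by
  have hc : (cc n) * (t, DihedralGroup.sr i) = (t, DihedralGroup.sr i) * ((cc n) * cc n) := by
    have h6 : ∀ j : ZMod 6, DihedralGroup.r 2 * DihedralGroup.sr j
        = DihedralGroup.sr j * (DihedralGroup.r 2 * DihedralGroup.r 2) := by decide
    show ((1:Cyc n) * t, DihedralGroup.r 2 * DihedralGroup.sr i)
      = (t * ((1:Cyc n) * 1), DihedralGroup.sr i * (DihedralGroup.r 2 * DihedralGroup.r 2))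
    rw [h6, one_mul, mul_one, mul_one]
  have h2 : ωω F n^2 + 2 * ωω F n = XX F n (cc n) * XX F n (cc n) - 1 := by
    unfold ωω; noncomm_ring
  rw [h2]
  unfold ωω
  rw [sub_mul, mul_sub, one_mul, mul_one, XX_mul, XX_mul, XX_mul, hc]

lemma wF : (ωω F n^2 + 2*ωω F n) * (ωω F n^2 + 2*ωω F n) = ωω F n^2 := by
  have e : (ωω F n^2 + 2*ωω F n) * (ωω F n^2 + 2*ωω F n)
      = ωω F n^3 * ωω F n + 4*ωω F n^3 + 3*ωω F n^2 + ωω F n^2 := by noncomm_ring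
  rw [e, omega_pow3, charA]
  noncomm_ring

lemma wA : (ωω F n^2 + 2*ωω F n) * ωω F n = 2*ωω F n^2 := by
  have e : (ωω F n^2 + 2*ωω F n) * ωω F n = ωω F n^3 + 2*ωω F n^2 := by noncomm_ring
  rw [e, omega_pow3]
  noncomm_ring

lemma wB : (ωω F n^2 + 2*ωω F n) * ωω F n^2 = 0 := by
  have e : (ωω F n^2 + 2*ωω F n) * ωω F n^2 = ωω F n^3*ωω F n + 2*ωω F n^3 := by noncomm_ring
  rw [e, omega_pow3]
  noncomm_ring

lemma wC : ωω F n * ωω F n^2 = 0 := by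
  have e : ωω F n * ωω F n^2 = ωω F n^3 := by noncomm_ring
  rw [e, omega_pow3]

lemma wE : ωω F n^2 * ωω F n = 0 := by
  have e : ωω F n^2 * ωω F n = ωω F n^3 := by noncomm_ring
  rw [e, omega_pow3]

lemma wD : ωω F n^2 * ωω F n^2 = 0 := by
  have e : ωω F n^2 * ωω F n^2 = ωω F n^3 * ωω F n := by noncomm_ring
  rw [e, omega_pow3]
  noncomm_ring

lemma omega2_mul_X (g : Gg n) : ωω F n^2 * XX F n g = XX F n g * ωω F n^2 := by
  obtain ⟨t, d⟩ := g
  cases d with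
  | r i =>
    have h := omega_mul_X_r F n t i
    rw [pow_two, mul_assoc, h, ← mul_assoc, h, mul_assoc, ← pow_two]
  | sr i =>
    have h := omega_mul_X_sr F n t i
    rw [pow_two, mul_assoc, h, ← mul_assoc, h, mul_assoc, wF, pow_two]

/-- generating set of the span corresponding to the kernel -/
def Pgen : Set (AA F n) :=
  Set.range (fun h : Gg n => XX F n h * ωω F n) ∪
    Set.range (fun h : Gg n => XX F n h * ωω F n^2)

noncomputable def Pspan : Submodule F (AA F n) := Submodule.span F (Pgen F n)

noncomputable def Qspan : Submodule F (AA F n) :=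
  Submodule.span F (Set.range (fun h : Gg n => XX F n h * ωω F n^2))

lemma Q_le_P : Qspan F n ≤ Pspan F n :=
  Submodule.span_mono (Set.subset_union_right)

lemma mem_P1 (h : Gg n) : XX F n h * ωω F n ∈ Pspan F n :=
  Submodule.subset_span (Or.inl ⟨h, rfl⟩)

lemma mem_P2 (h : Gg n) : XX F n h * ωω F n^2 ∈ Pspan F n :=
  Submodule.subset_span (Or.inr ⟨h, rfl⟩)

lemma mem_Q (h : Gg n) : XX F n h * ωω F n^2 ∈ Qspan F n :=
  Submodule.subset_span ⟨h, rfl⟩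

lemma two_mul_to_smul (y z : AA F n) : y * (2 * z) = (2:F) • (y * z) := by
  rw [Algebra.smul_def, _root_.map_ofNat]
  noncomm_ring

lemma gen_mul_11 (h h' : Gg n) :
    (XX F n h * ωω F n) * (XX F n h' * ωω F n) ∈ Qspan F n := by
  obtain ⟨t, d⟩ := h'
  cases d with
  | r i =>
    rw [conj_move _ _ _ (omega_mul_X_r F n t i), XX_mul, ← pow_two]
    exact mem_Q F n _
  | sr i =>
    rw [conj_move _ _ _ (omega_mul_X_sr F n t i), XX_mul, wA, two_mul_to_smul]
    exact Submodule.smul_mem _ _ (mem_Q F n _)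

lemma gen_mul_1q (h h' : Gg n) :
    (XX F n h * ωω F n) * (XX F n h' * ωω F n^2) = 0 := by
  obtain ⟨t, d⟩ := h'
  cases d with
  | r i =>
    rw [conj_move _ _ _ (omega_mul_X_r F n t i), wC, mul_zero]
  | sr i =>
    rw [conj_move _ _ _ (omega_mul_X_sr F n t i), wB, mul_zero]

lemma gen_mul_q1 (h h' : Gg n) :
    (XX F n h * ωω F n^2) * (XX F n h' * ωω F n) = 0 := by
  rw [conj_move _ _ _ (omega2_mul_X F n h'), wE, mul_zero]

lemma gen_mul_qq (h h' : Gg n) :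
    (XX F n h * ωω F n^2) * (XX F n h' * ωω F n^2) = 0 := by
  rw [conj_move _ _ _ (omega2_mul_X F n h'), wD, mul_zero]


lemma mul_mem_of_span {R A : Type*} [CommRing R] [Ring A] [Module R A]
    [SMulCommClass R A A] [IsScalarTower R A A]
    {s t : Set A} {U : Submodule R A}
    (h : ∀ a ∈ s, ∀ b ∈ t, a * b ∈ U) :
    ∀ x ∈ Submodule.span R s, ∀ y ∈ Submodule.span R t, x * y ∈ U := by
  intro x hx
  induction hx using Submodule.span_induction with
  | mem a ha =>
    intro y hy
    induction hy using Submodule.span_induction with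
    | mem b hb => exact h a ha b hb
    | zero => rw [mul_zero]; exact zero_mem _
    | add u v hu hv h1 h2 => rw [mul_add]; exact add_mem h1 h2
    | smul r u hu h1 => rw [mul_smul_comm]; exact Submodule.smul_mem _ _ h1
  | zero => intro y hy; rw [zero_mul]; exact zero_mem _
  | add u v hu hv h1 h2 =>
    intro y hy; rw [add_mul]; exact add_mem (h1 y hy) (h2 y hy)
  | smul r u hu h1 =>
    intro y hy; rw [smul_mul_assoc]; exact Submodule.smul_mem _ _ (h1 y hy)

lemma comm_of_span {R A : Type*} [CommRing R] [Ring A] [Module R A]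
    [SMulCommClass R A A] [IsScalarTower R A A] {s : Set A}
    (h : ∀ a ∈ s, ∀ b ∈ s, a * b = b * a) :
    ∀ x ∈ Submodule.span R s, ∀ y ∈ Submodule.span R s, x * y = y * x := by
  intro x hx y hy
  induction hx, hy using Submodule.span_induction₂ with
  | mem_mem a b ha hb => exact h a ha b hb
  | zero_left y hy => rw [zero_mul, mul_zero]
  | zero_right x hx => rw [zero_mul, mul_zero]
  | add_left x y z _ _ _ h1 h2 => rw [add_mul, mul_add, h1, h2]
  | add_right x y z _ _ _ h1 h2 => rw [mul_add, add_mul, h1, h2]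
  | smul_left r x y _ _ h1 => rw [smul_mul_assoc, mul_smul_comm, h1]
  | smul_right r x y _ _ h1 => rw [smul_mul_assoc, mul_smul_comm, h1]

lemma mulPP : ∀ x ∈ Pspan F n, ∀ y ∈ Pspan F n, x * y ∈ Qspan F n := by
  apply mul_mem_of_span
  rintro a (⟨h, rfl⟩ | ⟨h, rfl⟩) b (⟨h', rfl⟩ | ⟨h', rfl⟩)
  · exact gen_mul_11 F n h h'
  · rw [gen_mul_1q]; exact zero_mem _
  · rw [gen_mul_q1]; exact zero_mem _
  · rw [gen_mul_qq]; exact zero_mem _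

lemma mulQP : ∀ x ∈ Qspan F n, ∀ y ∈ Pspan F n, x * y = 0 := by
  have : ∀ x ∈ Qspan F n, ∀ y ∈ Pspan F n, x * y ∈ (⊥ : Submodule F (AA F n)) := by
    apply mul_mem_of_span
    rintro a ⟨h, rfl⟩ b (⟨h', rfl⟩ | ⟨h', rfl⟩)
    · rw [gen_mul_q1]; exact zero_mem _
    · rw [gen_mul_qq]; exact zero_mem _
  intro x hx y hy
  simpa using this x hx y hy

lemma mulPQ : ∀ x ∈ Pspan F n, ∀ y ∈ Qspan F n, x * y = 0 := by
  have : ∀ x ∈ Pspan F n, ∀ y ∈ Qspan F n, x * y ∈ (⊥ : Submodule F (AA F n)) := by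
    apply mul_mem_of_span
    rintro a (⟨h, rfl⟩ | ⟨h, rfl⟩) b ⟨h', rfl⟩
    · rw [gen_mul_1q]; exact zero_mem _
    · rw [gen_mul_qq]; exact zero_mem _
  intro x hx y hy
  simpa using this x hx y hy

lemma tripleP {x y z : AA F n} (hx : x ∈ Pspan F n) (hy : y ∈ Pspan F n)
    (hz : z ∈ Pspan F n) : x * y * z = 0 :=
  mulQP F n _ (mulPP F n x hx y hy) z hz

/-- generating set for the abelian normal part -/
def Lgen : Set (AA F n) :=
  Set.range (fun p : Cyc n × ZMod 6 => XX F n (p.1, .r p.2) * ωω F n) ∪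
    Set.range (fun h : Gg n => XX F n h * ωω F n^2)

noncomputable def Lspan : Submodule F (AA F n) := Submodule.span F (Lgen F n)

lemma mem_L_r (t : Cyc n) (i : ZMod 6) : XX F n (t, .r i) * ωω F n ∈ Lspan F n :=
  Submodule.subset_span (Or.inl ⟨(t, i), rfl⟩)

lemma mem_L_q (h : Gg n) : XX F n h * ωω F n^2 ∈ Lspan F n :=
  Submodule.subset_span (Or.inr ⟨h, rfl⟩)

lemma L_le_P : Lspan F n ≤ Pspan F n := by
  apply Submodule.span_le.mpr
  rintro a (⟨p, rfl⟩ | ⟨h, rfl⟩)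
  · exact mem_P1 F n _
  · exact mem_P2 F n _

lemma commL : ∀ x ∈ Lspan F n, ∀ y ∈ Lspan F n, x * y = y * x := by
  apply comm_of_span
  rintro a (⟨⟨t, i⟩, rfl⟩ | ⟨h, rfl⟩) b (⟨⟨t', i'⟩, rfl⟩ | ⟨h', rfl⟩)
  · rw [conj_move _ _ _ (omega_mul_X_r F n t' i'), conj_move _ _ _ (omega_mul_X_r F n t i),
      XX_mul, XX_mul]
    have : ((t, DihedralGroup.r i) : Gg n) * (t', DihedralGroup.r i')
        = (t', DihedralGroup.r i') * (t, DihedralGroup.r i) := by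
      have h6 : ∀ a b : ZMod 6, DihedralGroup.r a * DihedralGroup.r b
          = DihedralGroup.r b * DihedralGroup.r a := by decide
      show (t * t', DihedralGroup.r i * DihedralGroup.r i')
        = (t' * t, DihedralGroup.r i' * DihedralGroup.r i)
      rw [h6, mul_comm t t']
    rw [this]
  · rw [gen_mul_1q, gen_mul_q1]
  · rw [gen_mul_1q, gen_mul_q1]
  · rw [gen_mul_qq, gen_mul_qq]

/-- complement generators -/
noncomputable def mg (p : Cyc n × ZMod 2) : AA F n :=
  XX F n (p.1, .sr (3*(p.2.val : ZMod 6))) * ωω F n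
    + XX F n (p.1, .r (3*(p.2.val : ZMod 6))) * ωω F n

lemma Xc_mul_omega : XX F n (cc n) * ωω F n = ωω F n^2 + ωω F n := by
  unfold ωω; noncomm_ring

lemma XcXc_mul_omega : XX F n (cc n) * (XX F n (cc n) * ωω F n)
    = 2*(ωω F n^2) + ωω F n := by
  have e : XX F n (cc n) * (XX F n (cc n) * ωω F n)
      = ωω F n^3 + 2*(ωω F n^2) + ωω F n := by unfold ωω; noncomm_ring
  rw [e, omega_pow3]
  noncomm_ring

lemma zmod6_cases : ∀ i : ZMod 6, i = 3*(((i.val : ZMod 2)).val : ZMod 6)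
    ∨ i = 3*(((i.val : ZMod 2)).val : ZMod 6) + 2
    ∨ i = 3*(((i.val : ZMod 2)).val : ZMod 6) + 4 := by decide

lemma sr_shift (t : Cyc n) (w : ZMod 6) :
    ((t, DihedralGroup.sr w) : Gg n) * cc n = (t, DihedralGroup.sr (w + 2)) := by
  have h6 : DihedralGroup.sr w * DihedralGroup.r 2 = DihedralGroup.sr (w+2) := by
    rw [DihedralGroup.sr_mul_r]
  show (t * 1, DihedralGroup.sr w * DihedralGroup.r 2) = (t, DihedralGroup.sr (w + 2))
  rw [h6, mul_one]

lemma sr_decomp (t : Cyc n) (i : ZMod 6) :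
    XX F n (t, .sr i) * ωω F n - mg F n (t, (i.val : ZMod 2)) ∈ Lspan F n := by
  set e : ZMod 2 := (i.val : ZMod 2) with he
  set w : ZMod 6 := 3*((e.val : ZMod 6)) with hw
  have hmg : mg F n (t, e) = XX F n (t, .sr w) * ωω F n + XX F n (t, .r w) * ωω F n := rfl
  have hXc : XX F n (t, DihedralGroup.sr w) * XX F n (cc n) = XX F n (t, DihedralGroup.sr (w+2)) := by
    rw [XX_mul, sr_shift]
  have hXc2 : XX F n (t, DihedralGroup.sr (w+2)) * XX F n (cc n)
      = XX F n (t, DihedralGroup.sr (w+4)) := by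
    rw [XX_mul, sr_shift]
    norm_num [add_assoc]
  rcases zmod6_cases i with hi | hi | hi
  · rw [hi, ← hw, hmg]
    have : XX F n (t, DihedralGroup.sr w) * ωω F n
        - (XX F n (t, DihedralGroup.sr w) * ωω F n + XX F n (t, DihedralGroup.r w) * ωω F n)
        = -(XX F n (t, DihedralGroup.r w) * ωω F n) := by noncomm_ring
    rw [this]
    exact neg_mem (mem_L_r F n t w)
  · rw [hi, ← hw, hmg]
    have key : XX F n (t, DihedralGroup.sr (w+2)) * ωω F n
        = XX F n (t, DihedralGroup.sr w) * ωω F n^2 + XX F n (t, DihedralGroup.sr w) * ωω F n := by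
      rw [← hXc, mul_assoc, Xc_mul_omega]
      noncomm_ring
    rw [key]
    have : XX F n (t, DihedralGroup.sr w) * ωω F n ^ 2 + XX F n (t, DihedralGroup.sr w) * ωω F n
        - (XX F n (t, DihedralGroup.sr w) * ωω F n + XX F n (t, DihedralGroup.r w) * ωω F n)
        = XX F n (t, DihedralGroup.sr w) * ωω F n ^ 2
          - XX F n (t, DihedralGroup.r w) * ωω F n := by noncomm_ring
    rw [this]
    exact sub_mem (mem_L_q F n _) (mem_L_r F n t w)
  · rw [hi, ← hw, hmg]
    have key : XX F n (t, DihedralGroup.sr (w+4)) * ωω F n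
        = (2:F) • (XX F n (t, DihedralGroup.sr w) * ωω F n^2)
          + XX F n (t, DihedralGroup.sr w) * ωω F n := by
      rw [← hXc2, ← hXc, mul_assoc, mul_assoc, XcXc_mul_omega]
      rw [show XX F n (t, DihedralGroup.sr w) * (2 * ωω F n ^ 2 + ωω F n)
          = XX F n (t, DihedralGroup.sr w) * (2 * ωω F n ^ 2)
            + XX F n (t, DihedralGroup.sr w) * ωω F n from by noncomm_ring]
      rw [two_mul_to_smul]
    rw [key]
    have : (2:F) • (XX F n (t, DihedralGroup.sr w) * ωω F n ^ 2)
          + XX F n (t, DihedralGroup.sr w) * ωω F n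
        - (XX F n (t, DihedralGroup.sr w) * ωω F n + XX F n (t, DihedralGroup.r w) * ωω F n)
        = (2:F) • (XX F n (t, DihedralGroup.sr w) * ωω F n ^ 2)
          - XX F n (t, DihedralGroup.r w) * ωω F n := by
      abel
    rw [this]
    exact sub_mem (Submodule.smul_mem _ _ (mem_L_q F n _)) (mem_L_r F n t w)

lemma mg_mem_P (p : Cyc n × ZMod 2) : mg F n p ∈ Pspan F n :=
  add_mem (mem_P1 F n _) (mem_P1 F n _)


noncomputable def coeffL (g : Gg n) : AA F n →ₗ[F] F :=
  (Finsupp.lapply g).comp (MonoidAlgebra.coeffLinearEquiv F).toLinearMap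

lemma coeff_XX (g h : Gg n) : coeffL F n g (XX F n h) = if h = g then 1 else 0 := by
  show (Finsupp.single h (1:F)) g = if h = g then 1 else 0
  exact Finsupp.single_apply

abbrev In : Type := Cyc n × ZMod 2

noncomputable def ρmap : AA F n →ₗ[F] (In n → F) :=
  LinearMap.pi (fun p => coeffL F n (p.1, .sr (3*(p.2.val : ZMod 6)+2))
    - coeffL F n (p.1, .sr (3*(p.2.val : ZMod 6)+4)))

lemma rho_apply (x : AA F n) (p : In n) :
    ρmap F n x p = coeffL F n (p.1, .sr (3*(p.2.val : ZMod 6)+2)) x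
      - coeffL F n (p.1, .sr (3*(p.2.val : ZMod 6)+4)) x := rfl

lemma Xw_expand (h : Gg n) : XX F n h * ωω F n = XX F n (h * cc n) - XX F n h := by
  unfold ωω
  rw [mul_sub, mul_one, XX_mul]

lemma three_mul_zero (x : AA F n) : 3 * x = 0 := by rw [charA, zero_mul]

lemma Xw2_expand (h : Gg n) :
    XX F n h * ωω F n^2 = XX F n (h * cc n * cc n) + XX F n (h * cc n) + XX F n h := by
  have e1 : XX F n h * ωω F n^2
      = (XX F n h * XX F n (cc n)) * XX F n (cc n) - 2*(XX F n h * XX F n (cc n)) + XX F n h := by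
    unfold ωω; noncomm_ring
  rw [e1, XX_mul, XX_mul]
  rw [show XX F n (h * cc n * cc n) - 2 * XX F n (h * cc n) + XX F n h
      = XX F n (h * cc n * cc n) + XX F n (h * cc n) + XX F n h - 3 * XX F n (h * cc n) from by
    noncomm_ring]
  rw [three_mul_zero, sub_zero]

lemma r_mul_cc (t : Cyc n) (i : ZMod 6) :
    ((t, DihedralGroup.r i) : Gg n) * cc n = (t, DihedralGroup.r (i+2)) := by
  show (t * 1, DihedralGroup.r i * DihedralGroup.r 2) = (t, DihedralGroup.r (i+2))
  rw [DihedralGroup.r_mul_r, mul_one]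

lemma rho_r (t : Cyc n) (i : ZMod 6) : ρmap F n (XX F n (t, .r i) * ωω F n) = 0 := by
  funext p
  rw [rho_apply, Xw_expand, r_mul_cc]
  simp [coeff_XX, Prod.ext_iff]

lemma rho_q (h : Gg n) : ρmap F n (XX F n h * ωω F n^2) = 0 := by
  obtain ⟨s, d⟩ := h
  funext p
  simp only [Pi.zero_apply]
  rw [rho_apply, Xw2_expand]
  cases d with
  | r j =>
    rw [r_mul_cc, r_mul_cc]
    simp [coeff_XX, Prod.ext_iff]
  | sr j =>
    rw [sr_shift, sr_shift]
    by_cases hs : s = p.1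
    · subst hs
      have e1 := (by decide : ∀ j w : ZMod 6, (j+2+2 = w+2) ↔ (j = w+4))
      have e2 := (by decide : ∀ j w : ZMod 6, (j+2 = w+2) ↔ (j = w))
      have e3 := (by decide : ∀ j w : ZMod 6, (j+2+2 = w+4) ↔ (j = w))
      have e4 := (by decide : ∀ j w : ZMod 6, (j+2 = w+4) ↔ (j = w+2))
      simp only [_root_.map_add, coeff_XX, Prod.mk.injEq, DihedralGroup.sr.injEq, true_and]
      rw [if_congr (e1 j _) rfl rfl, if_congr (e2 j _) rfl rfl,
        if_congr (e3 j _) rfl rfl, if_congr (e4 j _) rfl rfl]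
      ring
    · simp [coeff_XX, Prod.ext_iff, hs]

lemma rho_L : ∀ x ∈ Lspan F n, ρmap F n x = 0 := by
  intro x hx
  have hle : Lspan F n ≤ LinearMap.ker (ρmap F n) := by
    apply Submodule.span_le.mpr
    rintro a (⟨⟨t, i⟩, rfl⟩ | ⟨h, rfl⟩) <;> simp only [SetLike.mem_coe, LinearMap.mem_ker]
    · exact rho_r F n t i
    · exact rho_q F n h
  exact LinearMap.mem_ker.mp (hle hx)

lemma rho_Q : ∀ x ∈ Qspan F n, ρmap F n x = 0 := by
  intro x hx
  have hle : Qspan F n ≤ LinearMap.ker (ρmap F n) := by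
    apply Submodule.span_le.mpr
    rintro a ⟨h, rfl⟩
    simp only [SetLike.mem_coe, LinearMap.mem_ker]
    exact rho_q F n h
  exact LinearMap.mem_ker.mp (hle hx)

lemma rho_mg (p' : In n) :
    ρmap F n (mg F n p') = fun p => if p = p' then 1 else 0 := by
  obtain ⟨t', v'⟩ := p'
  funext p
  rw [rho_apply]
  have hr : XX F n ((t', DihedralGroup.r (3*(v'.val : ZMod 6))) : Gg n) * ωω F n
      = XX F n ((t', DihedralGroup.r (3*(v'.val : ZMod 6)+2)) : Gg n)
        - XX F n (t', DihedralGroup.r (3*(v'.val : ZMod 6))) := by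
    rw [Xw_expand, r_mul_cc]
  have hsr : XX F n ((t', DihedralGroup.sr (3*(v'.val : ZMod 6))) : Gg n) * ωω F n
      = XX F n ((t', DihedralGroup.sr (3*(v'.val : ZMod 6)+2)) : Gg n)
        - XX F n (t', DihedralGroup.sr (3*(v'.val : ZMod 6))) := by
    rw [Xw_expand, sr_shift]
  rw [show mg F n (t', v') = XX F n ((t', DihedralGroup.sr (3*(v'.val : ZMod 6))) : Gg n) * ωω F n
        + XX F n ((t', DihedralGroup.r (3*(v'.val : ZMod 6))) : Gg n) * ωω F n from rfl]
  rw [hr, hsr]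
  obtain ⟨u, v⟩ := p
  by_cases hs : t' = u
  · subst hs
    have e1 := (by decide : ∀ a b : ZMod 2,
      ((3*(a.val : ZMod 6)+2 = 3*(b.val : ZMod 6)+2) ↔ (a = b)))
    have e2 := (by decide : ∀ a b : ZMod 2,
      ((3*(a.val : ZMod 6) = 3*(b.val : ZMod 6)+2) ↔ False))
    have e3 := (by decide : ∀ a b : ZMod 2,
      ((3*(a.val : ZMod 6)+2 = 3*(b.val : ZMod 6)+4) ↔ False))
    have e4 := (by decide : ∀ a b : ZMod 2,
      ((3*(a.val : ZMod 6) = 3*(b.val : ZMod 6)+4) ↔ False))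
    simp only [_root_.map_add, _root_.map_sub, coeff_XX, Prod.mk.injEq, DihedralGroup.sr.injEq,
      true_and, and_true]
    rw [if_congr (e1 v' v) rfl rfl, if_congr (e2 v' v) rfl rfl,
      if_congr (e3 v' v) rfl rfl, if_congr (e4 v' v) rfl rfl]
    by_cases hv : v' = v
    · subst hv
      simp [eq_comm, Prod.ext_iff]
    · simp [Prod.ext_iff, hv, Ne.symm hv]
  · simp [coeff_XX, Prod.ext_iff, hs, Ne.symm hs]

noncomputable def ςmap : (In n → F) →ₗ[F] AA F n where
  toFun f := ∑ p : In n, f p • mg F n p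
  map_add' f g := by
    simp [add_smul, Finset.sum_add_distrib]
  map_smul' r f := by
    simp [smul_smul, Finset.smul_sum]

lemma sigma_mem_P (f : In n → F) : ςmap F n f ∈ Pspan F n := by
  apply Submodule.sum_mem
  intro p _
  exact Submodule.smul_mem _ _ (mg_mem_P F n p)

lemma rho_sigma (f : In n → F) : ρmap F n (ςmap F n f) = f := by
  show ρmap F n (∑ p : In n, f p • mg F n p) = f
  rw [_root_.map_sum]
  funext q
  rw [Finset.sum_apply]
  have : ∀ p : In n, (ρmap F n (f p • mg F n p)) q
      = f p * (if q = p then 1 else 0) := by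
    intro p
    rw [_root_.map_smul, rho_mg]
    simp
  rw [Finset.sum_congr rfl (fun p _ => this p)]
  simp [Finset.sum_ite_eq]

lemma sigma_single (p : In n) :
    ςmap F n (fun q => if q = p then (1:F) else 0) = mg F n p := by
  show (∑ q : In n, (if q = p then (1:F) else 0) • mg F n q) = mg F n p
  have e : ∀ q : In n, (if q = p then (1:F) else 0) • mg F n q
      = if q = p then mg F n q else 0 := by
    intro q; by_cases h : q = p <;> simp [h]
  rw [Finset.sum_congr rfl (fun q _ => e q)]
  simp

lemma P_decomp : ∀ x ∈ Pspan F n, x - ςmap F n (ρmap F n x) ∈ Lspan F n := by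
  intro x hx
  induction hx using Submodule.span_induction with
  | mem a ha =>
    rcases ha with ⟨h, rfl⟩ | ⟨h, rfl⟩
    · obtain ⟨t, d⟩ := h
      cases d with
      | r i =>
        rw [rho_r, _root_.map_zero, sub_zero]
        exact mem_L_r F n t i
      | sr i =>
        dsimp only
        have hd := sr_decomp F n t i
        have hx' : XX F n (t, .sr i) * ωω F n
            = mg F n (t, (i.val : ZMod 2)) + (XX F n (t, .sr i) * ωω F n
              - mg F n (t, (i.val : ZMod 2))) := by abel
        rw [hx', _root_.map_add, rho_mg, rho_L F n _ hd, add_zero, sigma_single]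
        have : mg F n (t, (i.val : ZMod 2)) + (XX F n (t, DihedralGroup.sr i) * ωω F n
            - mg F n (t, (i.val : ZMod 2))) - mg F n (t, (i.val : ZMod 2))
            = XX F n (t, DihedralGroup.sr i) * ωω F n - mg F n (t, (i.val : ZMod 2)) := by abel
        rw [this]
        exact hd
    · rw [rho_q, _root_.map_zero, sub_zero]
      exact mem_L_q F n h
  | zero => simp
  | add u v hu hv h1 h2 =>
    have : u + v - ςmap F n (ρmap F n (u + v))
        = (u - ςmap F n (ρmap F n u)) + (v - ςmap F n (ρmap F n v)) := by
      rw [_root_.map_add, _root_.map_add]; abel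
    rw [this]; exact add_mem h1 h2
  | smul r u hu h1 =>
    have : r • u - ςmap F n (ρmap F n (r • u)) = r • (u - ςmap F n (ρmap F n u)) := by
      rw [_root_.map_smul, _root_.map_smul, smul_sub]
    rw [this]; exact Submodule.smul_mem _ _ h1


lemma w2_plus : ωω F n^2 + 2*ωω F n = XX F n (cc n) * XX F n (cc n) - 1 := by
  unfold ωω; noncomm_ring

lemma mg_mul (p p' : In n) : mg F n p * mg F n p' = 0 := by
  obtain ⟨t, v⟩ := p; obtain ⟨t', v'⟩ := p'
  have hzm : ∀ a b : ZMod 2, (3*(b.val:ZMod 6) - 3*(a.val:ZMod 6))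
      = 3*(a.val:ZMod 6)+3*(b.val:ZMod 6) := by decide
  have hsrsr : ((t, DihedralGroup.sr (3*(v.val:ZMod 6))) : Gg n)
      * (t', DihedralGroup.sr (3*(v'.val:ZMod 6)))
      = ((t*t', DihedralGroup.r (3*(v.val:ZMod 6)+3*(v'.val:ZMod 6))) : Gg n) := by
    show (t*t', DihedralGroup.sr _ * DihedralGroup.sr _) = _
    rw [DihedralGroup.sr_mul_sr, hzm]
  have hsrr : ((t, DihedralGroup.sr (3*(v.val:ZMod 6))) : Gg n)
      * (t', DihedralGroup.r (3*(v'.val:ZMod 6)))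
      = ((t*t', DihedralGroup.sr (3*(v.val:ZMod 6)+3*(v'.val:ZMod 6))) : Gg n) := by
    show (t*t', DihedralGroup.sr _ * DihedralGroup.r _) = _
    rw [DihedralGroup.sr_mul_r]
  have hrsr : ((t, DihedralGroup.r (3*(v.val:ZMod 6))) : Gg n)
      * (t', DihedralGroup.sr (3*(v'.val:ZMod 6)))
      = ((t*t', DihedralGroup.sr (3*(v.val:ZMod 6)+3*(v'.val:ZMod 6))) : Gg n) := by
    show (t*t', DihedralGroup.r _ * DihedralGroup.sr _) = _
    rw [DihedralGroup.r_mul_sr, hzm]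
  have hrr : ((t, DihedralGroup.r (3*(v.val:ZMod 6))) : Gg n)
      * (t', DihedralGroup.r (3*(v'.val:ZMod 6)))
      = ((t*t', DihedralGroup.r (3*(v.val:ZMod 6)+3*(v'.val:ZMod 6))) : Gg n) := by
    show (t*t', DihedralGroup.r _ * DihedralGroup.r _) = _
    rw [DihedralGroup.r_mul_r]
  set a := XX F n (t, DihedralGroup.sr (3*(v.val:ZMod 6))) with ha
  set b := XX F n (t, DihedralGroup.r (3*(v.val:ZMod 6))) with hb
  set a' := XX F n (t', DihedralGroup.sr (3*(v'.val:ZMod 6))) with ha'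
  set b' := XX F n (t', DihedralGroup.r (3*(v'.val:ZMod 6))) with hb'
  have e : mg F n (t,v) * mg F n (t',v')
      = (a * ωω F n) * (a' * ωω F n) + (a * ωω F n) * (b' * ωω F n)
        + (b * ωω F n) * (a' * ωω F n) + (b * ωω F n) * (b' * ωω F n) := by
    show (a * ωω F n + b * ωω F n) * (a' * ωω F n + b' * ωω F n) = _
    noncomm_ring
  rw [e]
  rw [ha, hb, ha', hb']
  rw [conj_move _ _ _ (omega_mul_X_sr F n t' (3*(v'.val:ZMod 6))),
    conj_move _ _ _ (omega_mul_X_r F n t' (3*(v'.val:ZMod 6))),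
    conj_move _ _ _ (omega_mul_X_sr F n t' (3*(v'.val:ZMod 6))),
    conj_move _ _ _ (omega_mul_X_r F n t' (3*(v'.val:ZMod 6)))]
  rw [XX_mul, XX_mul, XX_mul, XX_mul, hsrsr, hsrr, hrsr, hrr, wA]
  set A := XX F n ((t*t', DihedralGroup.r (3*(v.val:ZMod 6)+3*(v'.val:ZMod 6))) : Gg n)
  set B := XX F n ((t*t', DihedralGroup.sr (3*(v.val:ZMod 6)+3*(v'.val:ZMod 6))) : Gg n)
  have e2 : A * (2*ωω F n^2) + B * (ωω F n * ωω F n) + B * (2*ωω F n^2)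
      + A * (ωω F n * ωω F n) = 3*(A * ωω F n^2) + 3*(B * ωω F n^2) := by
    noncomm_ring
  rw [e2, three_mul_zero, three_mul_zero, add_zero]

noncomputable def Mspan : Submodule F (AA F n) := Submodule.span F (Set.range (mg F n))

lemma sigma_mem_M (f : In n → F) : ςmap F n f ∈ Mspan F n := by
  apply Submodule.sum_mem
  intro p _
  exact Submodule.smul_mem _ _ (Submodule.subset_span ⟨p, rfl⟩)

lemma mulMM : ∀ x ∈ Mspan F n, ∀ y ∈ Mspan F n, x * y = 0 := by
  have h := mul_mem_of_span (R := F) (A := AA F n) (U := (⊥ : Submodule F (AA F n)))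
    (s := Set.range (mg F n)) (t := Set.range (mg F n)) ?_
  · intro x hx y hy
    simpa using h x hx y hy
  · rintro x ⟨p, rfl⟩ y ⟨p', rfl⟩
    rw [mg_mul]
    exact zero_mem _

lemma pG_cc : pG n (cc n) = 1 := by
  show ((1 : Cyc n), pD (DihedralGroup.r 2)) = 1
  have : pD (DihedralGroup.r 2) = 1 := by decide
  rw [this]
  rfl

lemma piA_omega : piA F n (ωω F n) = 0 := by
  unfold ωω
  rw [_root_.map_sub, _root_.map_one]
  rw [show XX F n (cc n) = MonoidAlgebra.single (M := Gg n) (cc n) (1:F) from rfl]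
  rw [show (piA F n) (MonoidAlgebra.single (cc n) (1:F))
      = MonoidAlgebra.single (pG n (cc n)) (1:F) from by
    simp [piA, MonoidAlgebra.mapDomainAlgHom, Finsupp.mapDomain_single]]
  rw [pG_cc]
  simp [MonoidAlgebra.one_def]

lemma P_ker : ∀ x ∈ Pspan F n, piA F n x = 0 := by
  intro x hx
  have hle : Pspan F n ≤ LinearMap.ker (piA F n).toLinearMap := by
    apply Submodule.span_le.mpr
    rintro z (⟨h, rfl⟩ | ⟨h, rfl⟩) <;> simp only [SetLike.mem_coe, LinearMap.mem_ker,
      AlgHom.toLinearMap_apply, _root_.map_mul, _root_.map_pow, piA_omega] <;> noncomm_ring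
  exact LinearMap.mem_ker.mp (hle hx)

lemma sigA_piA_XX (g : Gg n) :
    sigA F n (piA F n (XX F n g)) = XX F n (iG n (pG n g)) := by
  rw [show XX F n g = MonoidAlgebra.single (M := Gg n) g (1:F) from rfl]
  simp [piA, sigA, MonoidAlgebra.mapDomainAlgHom, Finsupp.mapDomain_single, XX]

lemma ker_pD_cases : ∀ d : DihedralGroup 6, d = iDfun (pDfun d)
    ∨ d = iDfun (pDfun d) * .r 2 ∨ d = iDfun (pDfun d) * (.r 2 * .r 2) := by decide

lemma XX_decomp (g : Gg n) : XX F n g - XX F n (iG n (pG n g)) ∈ Pspan F n := by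
  obtain ⟨t, d⟩ := g
  have hiG : iG n (pG n (t, d)) = (t, iDfun (pDfun d)) := rfl
  rw [hiG]
  rcases ker_pD_cases d with hd | hd | hd
  · rw [← hd, sub_self]
    exact zero_mem _
  · have hg : ((t, d) : Gg n) = ((t, iDfun (pDfun d)) : Gg n) * cc n := by
      show _ = (t * 1, iDfun (pDfun d) * DihedralGroup.r 2)
      rw [mul_one, ← hd]
    rw [hg, ← Xw_expand]
    exact mem_P1 F n _
  · have hg : ((t, d) : Gg n) = ((t, iDfun (pDfun d)) : Gg n) * cc n * cc n := by
      show _ = ((t * 1) * 1, (iDfun (pDfun d) * DihedralGroup.r 2) * DihedralGroup.r 2)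
      rw [mul_one, mul_one, mul_assoc, ← hd]
    set h := ((t, iDfun (pDfun d)) : Gg n)
    have e : XX F n (h * cc n * cc n) - XX F n h = XX F n h * (ωω F n^2 + 2*ωω F n) := by
      rw [w2_plus, ← XX_mul, ← XX_mul]
      noncomm_ring
    rw [hg, e]
    rw [show XX F n h * (ωω F n^2 + 2*ωω F n)
        = XX F n h * ωω F n^2 + XX F n h * (2 * ωω F n) from by noncomm_ring]
    rw [two_mul_to_smul]
    exact add_mem (mem_P2 F n h) (Submodule.smul_mem _ _ (mem_P1 F n h))

lemma gen_decomp : ∀ x : AA F n, x - sigA F n (piA F n x) ∈ Pspan F n := by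
  intro x
  induction x using MonoidAlgebra.induction_on with
  | of g =>
    have hof : (MonoidAlgebra.of F (Gg n)) g = XX F n g := rfl
    rw [hof, sigA_piA_XX]
    exact XX_decomp F n g
  | add f g hf hg =>
    have e : (f + g) - sigA F n (piA F n (f + g))
        = (f - sigA F n (piA F n f)) + (g - sigA F n (piA F n g)) := by
      rw [_root_.map_add, _root_.map_add]; abel
    rw [e]; exact add_mem hf hg
  | smul r f hf =>
    rw [_root_.map_smul, _root_.map_smul, ← smul_sub]
    exact Submodule.smul_mem _ _ hf

lemma ker_sub : ∀ x : AA F n, piA F n x = 0 → x ∈ Pspan F n := by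
  intro x hx
  have := gen_decomp F n x
  rwa [hx, _root_.map_zero, sub_zero] at this


lemma unit_rel (x : AA F n) (hx : x ∈ Pspan F n) :
    (1 + x) * (1 - x + x*x) = 1 ∧ (1 - x + x*x) * (1 + x) = 1 := by
  have h3 : x*x*x = 0 := tripleP F n hx hx hx
  constructor
  · have e : (1 + x) * (1 - x + x*x) = 1 + x*x*x := by noncomm_ring
    rw [e, h3, add_zero]
  · have e : (1 - x + x*x) * (1 + x) = 1 + x*x*x := by noncomm_ring
    rw [e, h3, add_zero]

noncomputable def unitOf (x : AA F n) (hx : x ∈ Pspan F n) : (AA F n)ˣ :=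
  ⟨1 + x, 1 - x + x*x, (unit_rel F n x hx).1, (unit_rel F n x hx).2⟩

@[simp] lemma unitOf_val (x : AA F n) (hx : x ∈ Pspan F n) :
    (unitOf F n x hx : AA F n) = 1 + x := rfl

noncomputable def piU : (AA F n)ˣ →* (BB F n)ˣ :=
  Units.map (piA F n).toRingHom.toMonoidHom

noncomputable def sigU : (BB F n)ˣ →* (AA F n)ˣ :=
  Units.map (sigA F n).toRingHom.toMonoidHom

lemma piU_sigU (u : (BB F n)ˣ) : piU F n (sigU F n u) = u := by
  apply Units.ext
  show piA F n (sigA F n (u : BB F n)) = (u : BB F n)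
  exact piA_sigA F n _

noncomputable abbrev KK : Subgroup (AA F n)ˣ := (piU F n).ker

lemma mem_KK_iff (u : (AA F n)ˣ) : u ∈ KK F n ↔ piA F n (u : AA F n) = 1 := by
  constructor
  · intro h
    have := congrArg Units.val h
    simpa [piU] using this
  · intro h
    apply Units.ext
    simpa [piU] using h

lemma sub_one_mem_P {u : (AA F n)ˣ} (hu : u ∈ KK F n) :
    (u : AA F n) - 1 ∈ Pspan F n := by
  apply ker_sub
  rw [_root_.map_sub, (mem_KK_iff F n u).mp hu, _root_.map_one, sub_self]

noncomputable def ρK : ↥(KK F n) →* Multiplicative (In n → F) :=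
  MonoidHom.mk' (fun u => Multiplicative.ofAdd
    (ρmap F n (((u : (AA F n)ˣ) : AA F n) - 1))) (by
    intro u v
    apply Multiplicative.toAdd.injective
    have hval : (((u*v : ↥(KK F n)) : (AA F n)ˣ) : AA F n)
        = ((u : (AA F n)ˣ) : AA F n) * ((v : (AA F n)ˣ) : AA F n) := rfl
    set x := ((u : (AA F n)ˣ) : AA F n) - 1 with hx
    set y := ((v : (AA F n)ˣ) : AA F n) - 1 with hy
    have hxP : x ∈ Pspan F n := sub_one_mem_P F n u.2
    have hyP : y ∈ Pspan F n := sub_one_mem_P F n v.2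
    have e : (((u*v : ↥(KK F n)) : (AA F n)ˣ) : AA F n) - 1 = x * y + x + y := by
      rw [hval, hx, hy]; noncomm_ring
    show ρmap F n ((((u*v : ↥(KK F n)) : (AA F n)ˣ) : AA F n) - 1)
      = ρmap F n x + ρmap F n y
    rw [e, _root_.map_add, _root_.map_add, rho_Q F n _ (mulPP F n x hxP y hyP), zero_add])

lemma sigma_unit_mem (f : In n → F) : unitOf F n (ςmap F n f) (sigma_mem_P F n f) ∈ KK F n := by
  rw [mem_KK_iff]
  show piA F n (1 + ςmap F n f) = 1
  rw [_root_.map_add, _root_.map_one, P_ker F n _ (sigma_mem_P F n f), add_zero]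

noncomputable def σK : Multiplicative (In n → F) →* ↥(KK F n) :=
  MonoidHom.mk' (fun f => ⟨unitOf F n (ςmap F n f.toAdd) (sigma_mem_P F n _),
    sigma_unit_mem F n _⟩) (by
    intro f g
    apply Subtype.ext
    apply Units.ext
    show (1 : AA F n) + ςmap F n (f.toAdd + g.toAdd)
      = (1 + ςmap F n f.toAdd) * (1 + ςmap F n g.toAdd)
    have hM := mulMM F n _ (sigma_mem_M F n f.toAdd) _ (sigma_mem_M F n g.toAdd)
    rw [_root_.map_add]
    have e : (1 + ςmap F n f.toAdd) * (1 + ςmap F n g.toAdd)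
        = 1 + (ςmap F n f.toAdd + ςmap F n g.toAdd)
          + ςmap F n f.toAdd * ςmap F n g.toAdd := by noncomm_ring
    rw [e, hM, add_zero])

lemma rhoK_sigK (f : Multiplicative (In n → F)) : ρK F n (σK F n f) = f := by
  apply Multiplicative.toAdd.injective
  show ρmap F n ((1 + ςmap F n f.toAdd) - 1) = f.toAdd
  rw [add_sub_cancel_left, rho_sigma]

/-- kernel of ρK corresponds to L -/
noncomputable def kerRhoEquiv : ↥((ρK F n).ker)
    ≃ ↥(LinearMap.ker ((ρmap F n).domRestrict (Pspan F n))) where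
  toFun u := ⟨⟨(((u : ↥(KK F n)) : (AA F n)ˣ) : AA F n) - 1, sub_one_mem_P F n u.1.2⟩, by
    have hk := u.2
    have : ρmap F n ((((u : ↥(KK F n)) : (AA F n)ˣ) : AA F n) - 1) = 0 := by
      have := congrArg Multiplicative.toAdd hk
      simpa [ρK] using this
    simpa [LinearMap.mem_ker] using this⟩
  invFun x := ⟨⟨unitOf F n x.1.1 x.1.2, by
      rw [mem_KK_iff]
      show piA F n (1 + x.1.1) = 1
      rw [_root_.map_add, _root_.map_one, P_ker F n _ x.1.2, add_zero]⟩, by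
    have hx0 : ρmap F n x.1.1 = 0 := by
      have hx2 := x.2
      rw [LinearMap.mem_ker, LinearMap.domRestrict_apply] at hx2
      exact hx2
    apply Multiplicative.toAdd.injective
    show ρmap F n ((1 + x.1.1) - 1) = 0
    rw [add_sub_cancel_left, hx0]⟩
  left_inv u := by
    apply Subtype.ext; apply Subtype.ext; apply Units.ext
    show (1 : AA F n) + ((((u : ↥(KK F n)) : (AA F n)ˣ) : AA F n) - 1) = _
    noncomm_ring
  right_inv x := by
    apply Subtype.ext; apply Subtype.ext
    show (1 + x.1.1) - 1 = x.1.1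
    rw [add_sub_cancel_left]

lemma mem_L_of_ker {x : AA F n} (hP : x ∈ Pspan F n) (hρ : ρmap F n x = 0) :
    x ∈ Lspan F n := by
  have := P_decomp F n x hP
  rwa [hρ, _root_.map_zero, sub_zero] at this

lemma kerRho_comm (u v : ↥((ρK F n).ker)) : u * v = v * u := by
  apply Subtype.ext; apply Subtype.ext; apply Units.ext
  set x := (((u.1 : (AA F n)ˣ) : AA F n)) - 1 with hx
  set y := (((v.1 : (AA F n)ˣ) : AA F n)) - 1 with hy
  have hxL : x ∈ Lspan F n := by
    apply mem_L_of_ker F n (sub_one_mem_P F n u.1.2)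
    have := congrArg Multiplicative.toAdd u.2
    simpa [ρK] using this
  have hyL : y ∈ Lspan F n := by
    apply mem_L_of_ker F n (sub_one_mem_P F n v.1.2)
    have := congrArg Multiplicative.toAdd v.2
    simpa [ρK] using this
  have hcomm := commL F n x hxL y hyL
  show ((u.1 : (AA F n)ˣ) : AA F n) * ((v.1 : (AA F n)ˣ) : AA F n)
    = ((v.1 : (AA F n)ˣ) : AA F n) * ((u.1 : (AA F n)ˣ) : AA F n)
  have ex : ((u.1 : (AA F n)ˣ) : AA F n) = 1 + x := by rw [hx]; noncomm_ring
  have ey : ((v.1 : (AA F n)ˣ) : AA F n) = 1 + y := by rw [hy]; noncomm_ring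
  rw [ex, ey]
  have e1 : (1+x)*(1+y) = 1 + x + y + x*y := by noncomm_ring
  have e2 : (1+y)*(1+x) = 1 + x + y + y*x := by noncomm_ring
  rw [e1, e2, hcomm]

lemma kerRho_exp (u : ↥((ρK F n).ker)) : u ^ 3 = 1 := by
  apply Subtype.ext; apply Subtype.ext; apply Units.ext
  set x := (((u.1 : (AA F n)ˣ) : AA F n)) - 1 with hx
  have hxP : x ∈ Pspan F n := sub_one_mem_P F n u.1.2
  have ex : ((u.1 : (AA F n)ˣ) : AA F n) = 1 + x := by rw [hx]; noncomm_ring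
  show (((u.1 : (AA F n)ˣ) : AA F n)) ^ 3 = 1
  rw [ex]
  have e : (1+x)^3 = 1 + 3*x + 3*(x*x) + x*x*x := by noncomm_ring
  rw [e, three_mul_zero, three_mul_zero, tripleP F n hxP hxP hxP, add_zero, add_zero, add_zero]


noncomputable instance : Module.Finite F (AA F n) :=
  Module.Finite.equiv (MonoidAlgebra.coeffLinearEquiv F).symm

noncomputable instance : Module.Finite F (BB F n) :=
  Module.Finite.equiv (MonoidAlgebra.coeffLinearEquiv F).symm

lemma finrank_AA : Module.finrank F (AA F n) = 12 * n := by
  have e : AA F n ≃ₗ[F] (Gg n → F) :=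
    (MonoidAlgebra.coeffLinearEquiv F).trans (Finsupp.linearEquivFunOnFinite F F (Gg n))
  rw [e.finrank_eq, Module.finrank_pi, ← Nat.card_eq_fintype_card, Nat.card_prod,
    natCard_mult, Nat.card_zmod, DihedralGroup.nat_card]
  ring

lemma finrank_BB : Module.finrank F (BB F n) = 4 * n := by
  have e : BB F n ≃ₗ[F] (Hh n → F) :=
    (MonoidAlgebra.coeffLinearEquiv F).trans (Finsupp.linearEquivFunOnFinite F F (Hh n))
  rw [e.finrank_eq, Module.finrank_pi, ← Nat.card_eq_fintype_card, Nat.card_prod,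
    Nat.card_prod]
  simp only [natCard_mult, Nat.card_zmod]
  ring

lemma piA_surjective : Function.Surjective (piA F n).toLinearMap := by
  intro y
  exact ⟨sigA F n y, piA_sigA F n y⟩

lemma kerPiA_eq : LinearMap.ker (piA F n).toLinearMap = Pspan F n := by
  apply le_antisymm
  · intro x hx
    exact ker_sub F n x (by simpa using hx)
  · intro x hx
    simp only [LinearMap.mem_ker, AlgHom.toLinearMap_apply]
    exact P_ker F n x hx

lemma finrank_P : Module.finrank F (Pspan F n) = 8 * n := by
  have hrn := LinearMap.finrank_range_add_finrank_ker (piA F n).toLinearMap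
  rw [LinearMap.range_eq_top.mpr (piA_surjective F n), finrank_top, kerPiA_eq,
    finrank_AA, finrank_BB] at hrn
  omega

lemma rho_restrict_surjective :
    Function.Surjective ((ρmap F n).domRestrict (Pspan F n)) := by
  intro f
  refine ⟨⟨ςmap F n f, sigma_mem_P F n f⟩, ?_⟩
  rw [LinearMap.domRestrict_apply, rho_sigma]

lemma finrank_kerRho :
    Module.finrank F (LinearMap.ker ((ρmap F n).domRestrict (Pspan F n))) = 6 * n := by
  have hrn := LinearMap.finrank_range_add_finrank_ker ((ρmap F n).domRestrict (Pspan F n))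
  rw [LinearMap.range_eq_top.mpr (rho_restrict_surjective F n), finrank_top] at hrn
  have hpi : Module.finrank F (In n → F) = 2 * n := by
    rw [Module.finrank_pi, ← Nat.card_eq_fintype_card, Nat.card_prod]
    simp only [natCard_mult, Nat.card_zmod]
    ring
  rw [hpi, finrank_P] at hrn
  omega

lemma card_kerRho [Fintype F] :
    Nat.card ↥((ρK F n).ker) = (Fintype.card F)^(6*n) := by
  rw [Nat.card_congr (kerRhoEquiv F n)]
  haveI : Finite ↥(LinearMap.ker ((ρmap F n).domRestrict (Pspan F n))) := by
    haveI : Finite (AA F n) := by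
      haveI : Finite (Gg n →₀ F) := inferInstance
      exact Finite.of_equiv _ MonoidAlgebra.coeffEquiv.symm
    haveI : Finite ↥(Pspan F n) := Subtype.finite
    exact Subtype.finite
  letI : Fintype ↥(LinearMap.ker ((ρmap F n).domRestrict (Pspan F n))) := Fintype.ofFinite _
  rw [Nat.card_eq_fintype_card, Module.card_eq_pow_finrank (K := F), finrank_kerRho]

lemma card_W [Fintype F] :
    Nat.card (Multiplicative (In n → F)) = (Fintype.card F)^(2*n) := by
  rw [natCard_mult, Nat.card_fun, Nat.card_prod]
  simp only [natCard_mult, Nat.card_zmod]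
  rw [Nat.card_eq_fintype_card]
  ring

lemma exp_W (f : Multiplicative (In n → F)) : f ^ 3 = 1 := by
  apply Multiplicative.toAdd.injective
  show (3 : ℕ) • f.toAdd = 0
  funext p
  show (3:ℕ) • (f.toAdd p) = 0
  rw [nsmul_eq_mul, show ((3:ℕ):F) = 0 from by exact_mod_cast CharP.cast_eq_zero F 3, zero_mul]

end AlgebraPart


/-- Units in `F(C_n × D_12)` in characteristic 3. -/
theorem units_CnD12_char3 (F : Type) [Field F] [Fintype F] (k n q : ℕ)
    (hq : q = 3 ^ k) (hF : Fintype.card F = q) [CharP F 3] (hn : 0 < n) :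
    ∃ (φ₁ : (Fin (2 * n * k) → Cyc 3) →* MulAut (Fin (6 * n * k) → Cyc 3))
      (φ₂ : (MonoidAlgebra F (Cyc n × Cyc 2 × Cyc 2))ˣ →*
        MulAut ((Fin (6 * n * k) → Cyc 3) ⋊[φ₁] (Fin (2 * n * k) → Cyc 3))),
      Nonempty ((MonoidAlgebra F (Cyc n × DihedralGroup 6))ˣ ≃*
        ((Fin (6 * n * k) → Cyc 3) ⋊[φ₁] (Fin (2 * n * k) → Cyc 3)) ⋊[φ₂]
          (MonoidAlgebra F (Cyc n × Cyc 2 × Cyc 2))ˣ) := by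
  haveI : NeZero n := ⟨hn.ne'⟩
  subst hq
  haveI finAA : Finite (AA F n) := by
    haveI : Finite (Gg n →₀ F) := inferInstance
    exact Finite.of_equiv _ MonoidAlgebra.coeffEquiv.symm
  haveI : Finite ↥((ρK F n).ker) := Subtype.finite
  letI commKer : CommGroup ↥((ρK F n).ker) :=
    { (inferInstance : Group ↥((ρK F n).ker)) with mul_comm := kerRho_comm F n }
  have hcard1 : Nat.card ↥((ρK F n).ker) = 3 ^ (6 * n * k) := by
    rw [card_kerRho F n, hF, ← pow_mul]
    congr 1
    ring
  obtain ⟨eN⟩ := existsMulEquivPiCyc3 _ (6 * n * k) hcard1 (kerRho_exp F n)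
  have hcard2 : Nat.card (Multiplicative (In n → F)) = 3 ^ (2 * n * k) := by
    rw [card_W F n, hF, ← pow_mul]
    congr 1
    ring
  obtain ⟨eH⟩ := existsMulEquivPiCyc3 _ (2 * n * k) hcard2 (exp_W F n)
  let φ₁ := sdpCongrAction eN eH (splitAction (ρK F n) (σK F n))
  let e2 : ↥(KK F n) ≃* ((Fin (6 * n * k) → Cyc 3) ⋊[φ₁] (Fin (2 * n * k) → Cyc 3)) :=
    (splitMulEquiv (ρK F n) (σK F n) (rhoK_sigK F n)).trans
      (sdpCongr eN eH (splitAction (ρK F n) (σK F n)))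
  let φ₂ := sdpCongrAction e2 (MulEquiv.refl (BB F n)ˣ) (splitAction (piU F n) (sigU F n))
  refine ⟨φ₁, φ₂, ⟨?_⟩⟩
  exact (splitMulEquiv (piU F n) (sigU F n) (piU_sigU F n)).trans
    (sdpCongr e2 (MulEquiv.refl (BB F n)ˣ) (splitAction (piU F n) (sigU F n)))
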